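/- The one-dimensional sand automaton N of radius 1 with local rule f_N(a,b) = −1 if a < 0 or b < 0, and f_N(a,b) = 0 otherwise (where (a,b) is the range of a pile), is nilpotent: for every bounded configuration x ∈ B, taking c = min_(j∈ℤ) x_j, one has lim_(n→∞) d(F_N^n(x), c̄) = 0. -/

import Mathlib

open Filter

/-- The set `Z̃ = ℤ ∪ {−∞, +∞}` of extended integers. -/
abbrev Ztilde := WithBot (WithTop ℤ)

/-- Embedding of `ℤ` into `Z̃`. -/
def Ztilde.ofInt (z : ℤ) : Ztilde := ((z : WithTop ℤ) : WithBot (WithTop ℤ))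

/-- The underlying integer of a finite extended integer (0 on `±∞`). -/
def Ztilde.toInt (n : Ztilde) : ℤ := (n.unbotD 0).untopD 0

/-- The one-dimensional sand-automata configuration space `C = Z̃^ℤ`. -/
abbrev Conf1 := ℤ → Ztilde

/-- `ζ : C → {0,1}^(ℤ²)`, `ζ(x)_(i,k) = 1` iff `x_i ≥ k`. -/
noncomputable def zeta1 (x : Conf1) : ℤ × ℤ → Bool :=
  fun j => decide (Ztilde.ofInt j.2 ≤ x j.1)

open scoped Classical in
/-- The distance `d(x,y) = 2^(−min{|j|_∞ : ζ(x)_j ≠ ζ(y)_j})`, `0` if `x = y`. -/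
noncomputable def saDist1 (x y : Conf1) : ℝ :=
  if x = y then 0
  else (2 : ℝ) ^
    (-((sInf {n : ℕ | ∃ j : ℤ × ℤ, max j.1.natAbs j.2.natAbs = n ∧
        zeta1 x j ≠ zeta1 y j} : ℕ) : ℤ))

/-- The measuring device `β_r^m`. -/
noncomputable def beta (r : ℕ) (m : ℤ) (n : Ztilde) : Ztilde :=
  if Ztilde.ofInt (m + r) < n then ⊤
  else if n < Ztilde.ofInt (m - r) then ⊥
  else Ztilde.ofInt (n.toInt - m)

/-- A configuration is bounded: all its piles lie between two integers. -/
def Bounded (x : Conf1) : Prop :=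
  ∃ m1 m2 : ℤ, ∀ i : ℤ, Ztilde.ofInt m1 ≤ x i ∧ x i ≤ Ztilde.ofInt m2

/-- The global rule `F_N` of the sand automaton `N` of radius `1` with local rule
`f_N(a,b) = −1` if `a < 0` or `b < 0`, and `0` otherwise, where
`(a,b) = (β_1^(x_i)(x_(i−1)), β_1^(x_i)(x_(i+1)))` is the range at `i`. -/
noncomputable def FN (x : Conf1) : Conf1 := fun i =>
  if x i = ⊤ ∨ x i = ⊥ then x i
  else if beta 1 (x i).toInt (x (i - 1)) < Ztilde.ofInt 0 ∨
          beta 1 (x i).toInt (x (i + 1)) < Ztilde.ofInt 0 then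
    Ztilde.ofInt ((x i).toInt - 1)
  else x i

/-!
On integer-valued configurations `F_N` is the rule "a pile loses one grain when a neighbour is
strictly lower". Piles never drop below the minimum `c`, and a pile at height `c` stays there
forever. A pile above `c` next to a pile frozen at `c` loses one grain per step until it reaches
`c`, so the frozen region grows from a pile of height `c` one site at a time in both directions.
Every site is therefore eventually `c` forever, and the distance `d` only looks at finitely many
sites at each scale.
-/

open Topology

namespace Ztilde

lemma ofInt_le_ofInt {a b : ℤ} : ofInt a ≤ ofInt b ↔ a ≤ b := by simp [ofInt]

lemma ofInt_lt_ofInt {a b : ℤ} : ofInt a < ofInt b ↔ a < b := by simp [ofInt]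

lemma ofInt_inj {a b : ℤ} : ofInt a = ofInt b ↔ a = b := by simp [ofInt]

lemma ofInt_ne_top (a : ℤ) : ofInt a ≠ ⊤ := by simp [ofInt]

lemma ofInt_ne_bot (a : ℤ) : ofInt a ≠ ⊥ := by simp [ofInt]

lemma toInt_ofInt (a : ℤ) : (ofInt a).toInt = a := by simp [ofInt, toInt]

lemma ofInt_toInt {n : Ztilde} (hbot : n ≠ ⊥) (htop : n ≠ ⊤) : ofInt n.toInt = n := by
  rcases n with _ | _ | z
  · exact absurd rfl hbot
  · exact absurd rfl htop
  · rfl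

lemma le_of_forall_ofInt_le {a b : Ztilde} (h : ∀ k : ℤ, ofInt k ≤ a → ofInt k ≤ b) : a ≤ b := by
  rcases a with _ | _ | a
  · exact bot_le
  · rcases b with _ | _ | b
    · exact absurd (le_bot_iff.1 (h 0 le_top)) (ofInt_ne_bot 0)
    · exact le_rfl
    · exact absurd (ofInt_le_ofInt.1 (h (b + 1) le_top)) (by omega)
  · exact h a le_rfl

end Ztilde

open Ztilde

lemma beta_one_ofInt_lt_zero {m n : ℤ} : beta 1 m (ofInt n) < ofInt 0 ↔ n < m := by
  unfold beta
  split_ifs <;> simp only [ofInt_lt_ofInt, toInt_ofInt] at *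
  · exact iff_of_false not_top_lt (by omega)
  · exact iff_of_true (bot_lt_iff_ne_bot.2 (ofInt_ne_bot 0)) (by omega)
  · omega

lemma zeta1_injective : Function.Injective zeta1 := by
  intro x y h
  funext i
  have hk (k : ℤ) : ofInt k ≤ x i ↔ ofInt k ≤ y i := by
    simpa [zeta1] using congrFun h (i, k)
  exact le_antisymm (le_of_forall_ofInt_le fun k => (hk k).1)
    (le_of_forall_ofInt_le fun k => (hk k).2)

lemma saDist1_nonneg (x y : Conf1) : 0 ≤ saDist1 x y := by
  unfold saDist1
  split_ifs <;> positivity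

lemma saDist1_le_of_eq_of_natAbs_le {x y : Conf1} (M : ℕ)
    (h : ∀ i : ℤ, i.natAbs ≤ M → x i = y i) : saDist1 x y ≤ (2⁻¹ : ℝ) ^ M := by
  classical
  unfold saDist1
  split_ifs with hxy
  · positivity
  set S := {n : ℕ | ∃ j : ℤ × ℤ, max j.1.natAbs j.2.natAbs = n ∧ zeta1 x j ≠ zeta1 y j}
  have hS : S.Nonempty := by
    obtain ⟨j, hj⟩ := Function.ne_iff.1 (zeta1_injective.ne hxy)
    exact ⟨_, j, rfl, hj⟩
  have hMS : M < sInf S := by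
    obtain ⟨⟨i, k⟩, hn, hne⟩ := Nat.sInf_mem hS
    by_contra! hle
    exact hne (by simp only [zeta1, h i (by omega)])
  calc (2 : ℝ) ^ (-((sInf S : ℕ) : ℤ)) ≤ 2 ^ (-(M : ℤ)) :=
        zpow_le_zpow_right₀ one_le_two (by omega)
    _ = (2⁻¹ : ℝ) ^ M := by rw [zpow_neg, zpow_natCast, inv_pow]

lemma tendsto_saDist1_of_eventually_eq {ι : Type*} {l : Filter ι} {xs : ι → Conf1} {y : Conf1}
    (h : ∀ i, ∀ᶠ n in l, xs n i = y i) : Tendsto (fun n => saDist1 (xs n) y) l (𝓝 0) := by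
  refine tendsto_order.2 ⟨fun a ha => Eventually.of_forall fun n =>
    ha.trans_le (saDist1_nonneg _ _), fun ε hε => ?_⟩
  obtain ⟨M, hM⟩ := exists_pow_lt_of_lt_one hε (by norm_num : (2⁻¹ : ℝ) < 1)
  have hwindow : ∀ᶠ n in l, ∀ i ∈ Finset.Icc (-(M : ℤ)) M, xs n i = y i :=
    (eventually_all_finset _).2 fun i _ => h i
  filter_upwards [hwindow] with n hn
  refine (saDist1_le_of_eq_of_natAbs_le M fun i hi => hn i ?_).trans_lt hM
  rw [Finset.mem_Icc]
  omega

lemma Bounded.exists_eq_ofInt {x : Conf1} (hx : Bounded x) :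
    ∃ u : ℤ → ℤ, x = fun i => ofInt (u i) := by
  obtain ⟨m₁, m₂, hm⟩ := hx
  refine ⟨fun i => (x i).toInt, funext fun i => (ofInt_toInt ?_ ?_).symm⟩
  · exact ne_bot_of_le_ne_bot (ofInt_ne_bot m₁) (hm i).1
  · exact ne_top_of_le_ne_top (ofInt_ne_top m₂) (hm i).2

def FNInt (u : ℤ → ℤ) (i : ℤ) : ℤ :=
  if u (i - 1) < u i ∨ u (i + 1) < u i then u i - 1 else u i

lemma FN_ofInt (u : ℤ → ℤ) : FN (fun i => ofInt (u i)) = fun i => ofInt (FNInt u i) := by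
  funext i
  simp only [FN, FNInt, ofInt_ne_top, ofInt_ne_bot, or_self, if_false, toInt_ofInt,
    beta_one_ofInt_lt_zero]
  split_ifs <;> rfl

lemma iterate_FN_ofInt (u : ℤ → ℤ) (n : ℕ) :
    FN^[n] (fun i => ofInt (u i)) = fun i => ofInt (FNInt^[n] u i) :=
  ((Function.Semiconj.iterate_right (f := fun u i => ofInt (u i))
    (fun u => (FN_ofInt u).symm) n) u).symm

section FNInt

variable {c : ℤ} {u : ℤ → ℤ}

lemma le_FNInt (hu : ∀ j, c ≤ u j) (i : ℤ) : c ≤ FNInt u i := by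
  have := hu i
  have := hu (i - 1)
  have := hu (i + 1)
  unfold FNInt
  split_ifs <;> omega

lemma le_iterate_FNInt (hu : ∀ j, c ≤ u j) (n : ℕ) (i : ℤ) : c ≤ FNInt^[n] u i := by
  induction n generalizing u with
  | zero => exact hu i
  | succ n ih => exact ih (le_FNInt hu)

lemma FNInt_eq_of_eq (hu : ∀ j, c ≤ u j) {i : ℤ} (hi : u i = c) : FNInt u i = c := by
  have := hu (i - 1)
  have := hu (i + 1)
  unfold FNInt
  split_ifs <;> omega

lemma FNInt_eq_sub_one {i : ℤ} (hi : c < u i) (hnb : u (i - 1) = c ∨ u (i + 1) = c) :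
    FNInt u i = u i - 1 := by
  unfold FNInt
  split_ifs <;> omega

lemma iterate_FNInt_eq_of_le (hu : ∀ j, c ≤ u j) {i : ℤ} {n m : ℕ} (hnm : n ≤ m)
    (h : FNInt^[n] u i = c) : FNInt^[m] u i = c := by
  induction m, hnm using Nat.le_induction with
  | base => exact h
  | succ m _ ih =>
    rw [Function.iterate_succ_apply']
    exact FNInt_eq_of_eq (le_iterate_FNInt hu m) ih

lemma eventually_iterate_FNInt_eq_of_neighbor (hu : ∀ j, c ≤ u j) {i : ℤ}
    (h : ∀ᶠ n in atTop, FNInt^[n] u (i - 1) = c ∨ FNInt^[n] u (i + 1) = c) :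
    ∀ᶠ n in atTop, FNInt^[n] u i = c := by
  obtain ⟨N, hN⟩ := eventually_atTop.1 h
  set v := FNInt^[N] u i
  have descent (k : ℕ) : FNInt^[N + k] u i ≤ max c (v - k) := by
    induction k with
    | zero => simp [v]
    | succ k ih =>
      rw [← add_assoc, Function.iterate_succ_apply']
      rcases (le_iterate_FNInt hu (N + k) i).eq_or_lt with heq | hlt
      · rw [FNInt_eq_of_eq (le_iterate_FNInt hu _) heq.symm]
        exact le_max_left _ _
      · rw [FNInt_eq_sub_one hlt (hN _ (by omega))]
        push_cast
        omega
  refine eventually_atTop.2 ⟨N + (v - c).toNat, fun m hm => iterate_FNInt_eq_of_le hu hm ?_⟩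
  have := descent (v - c).toNat
  have := le_iterate_FNInt hu (N + (v - c).toNat) i
  omega

lemma eventually_iterate_FNInt_eq (hu : ∀ j, c ≤ u j) {j : ℤ} (hj : u j = c) (i : ℤ) :
    ∀ᶠ n in atTop, FNInt^[n] u i = c := by
  refine Int.inductionOn' i j ?_ (fun k _ ih => ?_) (fun k _ ih => ?_)
  · exact eventually_atTop.2 ⟨0, fun m _ => iterate_FNInt_eq_of_le hu (Nat.zero_le m) hj⟩
  · exact eventually_iterate_FNInt_eq_of_neighbor hu
      (ih.mono fun n hn => Or.inl (by rwa [add_sub_cancel_right]))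
  · exact eventually_iterate_FNInt_eq_of_neighbor hu
      (ih.mono fun n hn => Or.inr (by rwa [sub_add_cancel]))

end FNInt

/-- The sand automaton `N` is nilpotent: for every bounded
configuration `x`, taking `c = min_j x_j`, the iterates of `x` converge to the
constant configuration `c̄`. -/
theorem N_nilpotent (x : Conf1) (hx : Bounded x) (c : ℤ)
    (hc_mem : ∃ j : ℤ, x j = Ztilde.ofInt c)
    (hc_min : ∀ j : ℤ, Ztilde.ofInt c ≤ x j) :
    Filter.Tendsto (fun n : ℕ => saDist1 (FN^[n] x) (fun _ => Ztilde.ofInt c))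
      Filter.atTop (nhds 0) := by
  obtain ⟨u, rfl⟩ := hx.exists_eq_ofInt
  obtain ⟨j, hj⟩ := hc_mem
  simp only [ofInt_le_ofInt] at hc_min
  refine tendsto_saDist1_of_eventually_eq fun i => ?_
  filter_upwards [eventually_iterate_FNInt_eq hc_min (ofInt_inj.1 hj) i] with n hn
  simp only [iterate_FN_ofInt, hn]
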